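/- Pointwise inequality for the fractional Laplacian: for 0 < α < 2 and a Schwartz function ψ on ℝ^d, at every point x one has 2·ψ(x)·((-Δ)^{α/2}ψ)(x) ≥ ((-Δ)^{α/2}(ψ²))(x). -/
import Mathlib


open MeasureTheory Real Set Filter Topology SchwartzMap

/-- Pointwise Córdoba–Córdoba inequality for the fractional Laplacian: for `0 < α < 2` and a
Schwartz function `ψ` on `ℝ^d`, if `Lψ x` and `Lψ² x` are the values of the fractional
Laplacian `(-Δ)^{α/2}` (given by the principal-value kernel formula with constant
`c = c_{d,α} > 0`) of `ψ` and `ψ²` at `x`, then `2 ψ(x) (Lψ)(x) ≥ (Lψ²)(x)`. -/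
theorem cordoba_cordoba_pointwise (d : ℕ) (α c : ℝ) (hd : 0 < d)
    (hα0 : 0 < α) (hα2 : α < 2) (hc : 0 < c)
    (ψ : 𝓢(EuclideanSpace ℝ (Fin d), ℝ))
    (x : EuclideanSpace ℝ (Fin d)) (Lψx Lψsqx : ℝ)
    (hLψ : Tendsto (fun ε : ℝ =>
        -c * ∫ y in {y : EuclideanSpace ℝ (Fin d) | ε < ‖y - x‖},
          (ψ y - ψ x) / ‖y - x‖ ^ ((d : ℝ) + α))
      (𝓝[>] 0) (𝓝 Lψx))
    (hLψsq : Tendsto (fun ε : ℝ =>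
        -c * ∫ y in {y : EuclideanSpace ℝ (Fin d) | ε < ‖y - x‖},
          ((ψ y) ^ 2 - (ψ x) ^ 2) / ‖y - x‖ ^ ((d : ℝ) + α))
      (𝓝[>] 0) (𝓝 Lψsqx)) :
    Lψsqx ≤ 2 * ψ x * Lψx := by
  -- boundedness of ψ
  obtain ⟨C, hC⟩ : ∃ C : ℝ, ∀ y, |ψ y| ≤ C := by
    refine ⟨‖ψ.toBoundedContinuousFunction‖, fun y => ?_⟩
    simpa [Real.norm_eq_abs] using ψ.toBoundedContinuousFunction.norm_coe_le_norm y
  have hCpos : (0:ℝ) ≤ C := le_trans (abs_nonneg _) (hC x)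
  -- integrability of the kernel away from the singularity
  have hker : ∀ ε : ℝ, 0 < ε →
      IntegrableOn (fun y : EuclideanSpace ℝ (Fin d) => (1:ℝ) / ‖y - x‖ ^ ((d : ℝ) + α))
        {y : EuclideanSpace ℝ (Fin d) | ε < ‖y - x‖} := by
    intro ε hε
    have hnr : (Module.finrank ℝ (EuclideanSpace ℝ (Fin d)) : ℝ) < (d : ℝ) + α := by
      rw [finrank_euclideanSpace_fin]; linarith
    have h0 : Integrable (fun y : EuclideanSpace ℝ (Fin d) => ((1:ℝ) + ‖y‖) ^ (-((d:ℝ)+α))) :=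
      integrable_one_add_norm hnr
    have h1 : Integrable
        (fun y : EuclideanSpace ℝ (Fin d) => ((1:ℝ) + ‖y - x‖) ^ (-((d:ℝ)+α))) :=
      h0.comp_sub_right x
    refine ((h1.const_mul (((1+ε)/ε) ^ ((d:ℝ)+α))).integrableOn).mono' ?_ ?_
    · apply AEStronglyMeasurable.restrict
      exact (Measurable.div measurable_const
        ((measurable_id.sub_const x).norm.pow_const _)).aestronglyMeasurable
    · refine (ae_restrict_iff' ?_).2 (ae_of_all _ ?_)
      · exact measurableSet_lt measurable_const (measurable_id.sub_const x).norm
      · intro y hy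
        simp only [Set.mem_setOf_eq] at hy
        set t := ‖y - x‖ with ht
        have htpos : 0 < t := lt_trans hε hy
        have hb : (1 + t) ≤ ((1+ε)/ε) * t := by
          rw [div_mul_eq_mul_div, le_div_iff₀ hε]; nlinarith
        have h2 : ((1:ℝ) + t) ^ ((d:ℝ)+α) ≤ (((1+ε)/ε) * t) ^ ((d:ℝ)+α) :=
          rpow_le_rpow (by positivity) hb (by positivity)
        rw [mul_rpow (by positivity) htpos.le] at h2
        have hk : (0:ℝ) < t ^ ((d:ℝ)+α) := rpow_pos_of_pos htpos _
        rw [norm_div, norm_one, Real.norm_eq_abs, abs_of_pos hk, rpow_neg (by positivity),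
          ← one_div]
        rw [div_le_iff₀ hk]
        have hP : (0:ℝ) < (1+t)^((d:ℝ)+α) := rpow_pos_of_pos (by positivity) _
        rw [show ((1+ε)/ε)^((d:ℝ)+α) * (1/(1+t)^((d:ℝ)+α)) * t^((d:ℝ)+α)
            = (((1+ε)/ε)^((d:ℝ)+α) * t^((d:ℝ)+α))/(1+t)^((d:ℝ)+α) by ring,
          le_div_iff₀ hP, one_mul]
        exact h2
  -- the key eventual inequality
  have key : ∀ ε : ℝ, ε ∈ Ioi (0:ℝ) →
      (fun ε : ℝ => -c * ∫ y in {y : EuclideanSpace ℝ (Fin d) | ε < ‖y - x‖},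
          ((ψ y) ^ 2 - (ψ x) ^ 2) / ‖y - x‖ ^ ((d : ℝ) + α)) ε ≤
      (fun ε : ℝ => 2 * ψ x * (-c * ∫ y in {y : EuclideanSpace ℝ (Fin d) | ε < ‖y - x‖},
          (ψ y - ψ x) / ‖y - x‖ ^ ((d : ℝ) + α))) ε := by
    intro ε hε
    simp only [mem_Ioi] at hε
    set S := {y : EuclideanSpace ℝ (Fin d) | ε < ‖y - x‖} with hS
    have hmeas : MeasurableSet S :=
      measurableSet_lt measurable_const (measurable_id.sub_const x).norm
    have hkmeas : Measurable fun y : EuclideanSpace ℝ (Fin d) => ‖y - x‖ ^ ((d:ℝ)+α) :=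
      (measurable_id.sub_const x).norm.pow_const _
    have hkerS := hker ε hε
    -- integrability of g1
    have hg1 : IntegrableOn
        (fun y : EuclideanSpace ℝ (Fin d) => (ψ y - ψ x) / ‖y - x‖ ^ ((d:ℝ)+α)) S := by
      refine (hkerS.const_mul (C + |ψ x|)).mono' ?_ ?_
      · exact (((ψ.continuous.measurable.sub_const (ψ x))).div hkmeas).aestronglyMeasurable.restrict
      · refine (ae_restrict_iff' hmeas).2 (ae_of_all _ fun y hy => ?_)
        have htpos : (0:ℝ) < ‖y - x‖ := lt_trans hε hy
        have hk : (0:ℝ) < ‖y - x‖ ^ ((d:ℝ)+α) := rpow_pos_of_pos htpos _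
        rw [Real.norm_eq_abs, abs_div, abs_of_pos hk, mul_one_div]
        gcongr
        calc |ψ y - ψ x| ≤ |ψ y| + |ψ x| := abs_sub _ _
          _ ≤ C + |ψ x| := by linarith [hC y]
    -- integrability of g2
    have hg2 : IntegrableOn
        (fun y : EuclideanSpace ℝ (Fin d) =>
          ((ψ y)^2 - (ψ x)^2) / ‖y - x‖ ^ ((d:ℝ)+α)) S := by
      refine (hkerS.const_mul (C^2 + (ψ x)^2)).mono' ?_ ?_
      · exact (((ψ.continuous.measurable.pow_const 2).sub_const ((ψ x)^2)).div
          hkmeas).aestronglyMeasurable.restrict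
      · refine (ae_restrict_iff' hmeas).2 (ae_of_all _ fun y hy => ?_)
        have htpos : (0:ℝ) < ‖y - x‖ := lt_trans hε hy
        have hk : (0:ℝ) < ‖y - x‖ ^ ((d:ℝ)+α) := rpow_pos_of_pos htpos _
        rw [Real.norm_eq_abs, abs_div, abs_of_pos hk, mul_one_div]
        gcongr
        have hy2 : (ψ y)^2 ≤ C^2 := sq_le_sq' (abs_le.1 (hC y)).1 (abs_le.1 (hC y)).2
        rw [abs_le]
        constructor <;> nlinarith [sq_nonneg (ψ y), sq_nonneg (ψ x)]
    -- pointwise comparison and conclusion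
    have hmono : (∫ y in S, 2 * ψ x * ((ψ y - ψ x) / ‖y - x‖ ^ ((d:ℝ)+α)))
        ≤ ∫ y in S, ((ψ y)^2 - (ψ x)^2) / ‖y - x‖ ^ ((d:ℝ)+α) := by
      refine setIntegral_mono_on (hg1.const_mul _) hg2 hmeas fun y hy => ?_
      have htpos : (0:ℝ) < ‖y - x‖ := lt_trans hε hy
      have hk : (0:ℝ) < ‖y - x‖ ^ ((d:ℝ)+α) := rpow_pos_of_pos htpos _
      rw [show 2 * ψ x * ((ψ y - ψ x) / ‖y - x‖ ^ ((d:ℝ)+α))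
          = (2 * ψ x * (ψ y - ψ x)) / ‖y - x‖ ^ ((d:ℝ)+α) by ring]
      gcongr
      nlinarith [sq_nonneg (ψ y - ψ x)]
    have heq : (∫ y in S, 2 * ψ x * ((ψ y - ψ x) / ‖y - x‖ ^ ((d:ℝ)+α)))
        = 2 * ψ x * ∫ y in S, (ψ y - ψ x) / ‖y - x‖ ^ ((d:ℝ)+α) :=
      MeasureTheory.integral_const_mul _ _
    have hfin := mul_le_mul_of_nonneg_left hmono hc.le
    rw [heq] at hfin
    simp only
    nlinarith [hfin]
  have h2 : Tendsto (fun ε : ℝ => 2 * ψ x *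
      (-c * ∫ y in {y : EuclideanSpace ℝ (Fin d) | ε < ‖y - x‖},
        (ψ y - ψ x) / ‖y - x‖ ^ ((d : ℝ) + α))) (𝓝[>] 0) (𝓝 (2 * ψ x * Lψx)) :=
    hLψ.const_mul (2 * ψ x)
  exact le_of_tendsto_of_tendsto hLψsq h2 (eventually_nhdsWithin_of_forall key)
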